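/- arXiv:2507.23628 — 3 statements merged into one kernel-verified Lean document; each statement's English description precedes it below -/
import Mathlib

section
/- Let G be a locally compact abelian group, H ⊆ G a closed subgroup, and ψ a nonzero positive Radon measure on G with supp(ψ) ⊆ H whose Fourier transform (as a tempered measure) is a measure supported in the annihilator H^⊥. Then ψ is translation invariant under H, hence a Haar measure on H. -/
/-!
Translating a test function `f` by `h ∈ H` does not change its Fourier coefficient at any
character `χ` with `χ h = 1`, and `ψ̂` is concentrated on such characters since it lives on `H^⊥`.
By the Parseval pairing, `ψ` therefore integrates `f` and its translate alike, and a regular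
measure is determined by its integrals against compactly supported continuous functions.
-/

open MeasureTheory

namespace PontryaginDual

variable {G : Type*} [Monoid G] [TopologicalSpace G]

lemma continuous_apply (h : G) :
    Continuous fun χ : PontryaginDual G => ((χ h : Circle) : ℂ) :=
  continuous_subtype_val.comp (continuous_eval_const (F := G →ₜ* Circle) h)

lemma ae_apply_eq_one_of_measure_eq_zero_off_annihilator
    [MeasurableSpace (PontryaginDual G)] [BorelSpace (PontryaginDual G)]
    {S : Set G} {ν : Measure (PontryaginDual G)}
    (hν : ∀ t : Set (PontryaginDual G), MeasurableSet t →
      Disjoint t {χ : PontryaginDual G | ∀ h ∈ S, χ h = 1} → ν t = 0)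
    {h : G} (hh : h ∈ S) :
    ∀ᵐ χ ∂ν, ((χ h : Circle) : ℂ) = 1 := by
  refine ae_iff.mpr (hν _ ?_ ?_)
  · exact (isClosed_eq (continuous_apply h) continuous_const).measurableSet.compl
  · refine Set.disjoint_left.mpr fun χ hχ hχS => hχ ?_
    simp [hχS h hh]

end PontryaginDual

lemma integral_conj_mul_comp_mul_right_of_apply_eq_one
    {G : Type*} [Group G] [TopologicalSpace G] [MeasurableSpace G] [MeasurableMul G]
    (μ : Measure G) [μ.IsMulRightInvariant] (χ : PontryaginDual G) (f : G → ℂ) {h : G}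
    (hχ : ((χ h : Circle) : ℂ) = 1) :
    ∫ g, (starRingEnd ℂ) (χ g : ℂ) * f (g * h) ∂μ =
      ∫ g, (starRingEnd ℂ) (χ g : ℂ) * f g ∂μ := by
  have hperiod : ∀ g : G, ((χ (g * h) : Circle) : ℂ) = χ g := fun g => by
    rw [map_mul, Circle.coe_mul, hχ, mul_one]
  simpa only [hperiod] using
    integral_mul_right_eq_self (μ := μ) (fun g => (starRingEnd ℂ) (χ g : ℂ) * f g) h

lemma MeasureTheory.Measure.map_mul_right_eq_self_of_integral_comp_mul_right
    {G : Type*} [Group G] [TopologicalSpace G] [IsTopologicalGroup G] [LocallyCompactSpace G]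
    [T2Space G] [MeasurableSpace G] [BorelSpace G] (ψ : Measure G) [ψ.Regular] (h : G)
    (hψ : ∀ f : G → ℂ, Continuous f → HasCompactSupport f →
      ∫ g, f (g * h) ∂ψ = ∫ g, f g ∂ψ) :
    ψ.map (· * h) = ψ := by
  have : (ψ.map (· * h)).Regular := Measure.Regular.map (Homeomorph.mulRight h)
  refine Measure.ext_of_integral_eq_on_compactlySupported fun f => ?_
  rw [integral_map (measurable_mul_const h).aemeasurable (map_continuous f).aestronglyMeasurable]
  have hf : HasCompactSupport fun g => (f g : ℂ) :=
    f.hasCompactSupport.comp_left Complex.ofReal_zero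
  have := hψ (fun g => (f g : ℂ)) (Complex.continuous_ofReal.comp f.continuous) hf
  rwa [integral_complex_ofReal, integral_complex_ofReal, Complex.ofReal_inj] at this

theorem measure_haar_of_fourier_supported_in_annihilator_general
    {G : Type*} [CommGroup G] [TopologicalSpace G] [IsTopologicalGroup G]
    [LocallyCompactSpace G] [T2Space G] [MeasurableSpace G] [BorelSpace G]
    [MeasurableSpace (PontryaginDual G)] [BorelSpace (PontryaginDual G)]
    (μ : Measure G) [μ.IsHaarMeasure]
    (H : Subgroup G)
    (ψ : Measure G) [ψ.Regular]
    (ψhat : Measure (PontryaginDual G))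
    (hsupphat : ∀ t : Set (PontryaginDual G), MeasurableSet t →
      Disjoint t {χ : PontryaginDual G | ∀ h ∈ H, χ h = 1} → ψhat t = 0)
    (hdual : ∀ f : G → ℂ, Continuous f → HasCompactSupport f →
      ∫ g, f g ∂ψ =
        ∫ χ : PontryaginDual G, (∫ g, (starRingEnd ℂ) (χ g : ℂ) * f g ∂μ) ∂ψhat) :
    ∀ h ∈ H, ∀ s : Set G, MeasurableSet s → ψ ((fun g => g * h) ⁻¹' s) = ψ s := by
  intro h hh s hs
  have hinv : ψ.map (· * h) = ψ := by
    refine ψ.map_mul_right_eq_self_of_integral_comp_mul_right h fun f hf hcf => ?_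
    rw [hdual (fun g => f (g * h)) (hf.comp (continuous_mul_const h))
        (hcf.comp_homeomorph (Homeomorph.mulRight h)), hdual f hf hcf]
    refine integral_congr_ae ?_
    filter_upwards [PontryaginDual.ae_apply_eq_one_of_measure_eq_zero_off_annihilator
      (S := H) hsupphat hh] with χ hχ
    exact integral_conj_mul_comp_mul_right_of_apply_eq_one μ χ f hχ
  rw [← Measure.map_apply (measurable_mul_const h) hs, hinv]

/-- Let `G` be a locally compact abelian group, `H ⊆ G` a closed subgroup, and
`ψ` a nonzero positive Radon measure on `G` supported in `H` whose Fourier transform is a measure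
`ψ̂` supported in the annihilator `H^⊥` (the support conditions and the distributional meaning of
the Fourier transform are expressed through the Parseval-type pairing `hdual`). Then `ψ` is
translation invariant under `H`, hence a Haar measure on `H`. -/
theorem measure_haar_of_fourier_supported_in_annihilator
    {G : Type*} [CommGroup G] [TopologicalSpace G] [IsTopologicalGroup G]
    [LocallyCompactSpace G] [T2Space G] [MeasurableSpace G] [BorelSpace G]
    [MeasurableSpace (PontryaginDual G)] [BorelSpace (PontryaginDual G)]
    (μ : Measure G) [μ.IsHaarMeasure]
    (H : Subgroup G) (hH : IsClosed (H : Set G))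
    (ψ : Measure G) (hne : ψ ≠ 0) [ψ.Regular]
    (hsupp : ∀ s : Set G, MeasurableSet s → Disjoint s (H : Set G) → ψ s = 0)
    (ψhat : Measure (PontryaginDual G))
    (hsupphat : ∀ t : Set (PontryaginDual G), MeasurableSet t →
      Disjoint t {χ : PontryaginDual G | ∀ h ∈ H, χ h = 1} → ψhat t = 0)
    (hdual : ∀ f : G → ℂ, Continuous f → HasCompactSupport f →
      ∫ g, f g ∂ψ =
        ∫ χ : PontryaginDual G, (∫ g, (starRingEnd ℂ) (χ g : ℂ) * f g ∂μ) ∂ψhat) :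
    ∀ h ∈ H, ∀ s : Set G, MeasurableSet s → ψ ((fun g => g * h) ⁻¹' s) = ψ s :=
  measure_haar_of_fourier_supported_in_annihilator_general μ H ψ ψhat hsupphat hdual
end

section
/- Let G be a second countable locally compact abelian group and H a compact open subgroup with Haar measure μ_G normalized so that the Fourier inversion formula holds with Haar measure μ_Ĝ on Ĝ. Then μ_G(H) · μ_Ĝ(H^⊥) = 1, where H^⊥ is the (compact open) annihilator of H in Ĝ. -/
/-!
The Fourier transform of `1_H` is `μ(H) · 1_{H^⊥}`: on `H^⊥` the integrand is `1`, and off `H^⊥`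
the integral of a character that is nontrivial on `H` vanishes by translation invariance.
Since `H^⊥` is the dual of the discrete group `G ⧸ H`, it is compact, so this transform is
integrable, and Fourier inversion at `1` reads `1 = μ(H) · μ̂(H^⊥)`.
-/

open MeasureTheory

theorem Subgroup.setIntegral_monoidHom_eq_zero {G 𝕜 : Type*} [Group G] [MeasurableSpace G]
    [MeasurableMul G] [RCLike 𝕜] {μ : Measure G} [μ.IsMulLeftInvariant]
    (H : Subgroup G) (hH : MeasurableSet (H : Set G))
    (ψ : G →* 𝕜) {h : G} (hh : h ∈ H) (hψ : ψ h ≠ 1) :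
    ∫ g in H, ψ g ∂μ = 0 := by
  have htrans : ∀ x, (H : Set G).indicator ψ (h * x) = ψ h * (H : Set G).indicator ψ x := by
    intro x
    by_cases hx : x ∈ H
    · simp [hx, H.mul_mem hh hx]
    · simp [hx, (H.mul_mem_cancel_left hh).not.mpr hx]
  have hfix : ∫ g in H, ψ g ∂μ = ψ h * ∫ g in H, ψ g ∂μ := by
    simp_rw [← integral_indicator hH, ← integral_const_mul, ← htrans]
    exact (integral_mul_left_eq_self _ h).symm
  have : (ψ h - 1) * ∫ g in H, ψ g ∂μ = 0 := by rw [sub_mul, one_mul, ← hfix, sub_self]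
  exact (mul_eq_zero.mp this).resolve_left (sub_ne_zero.mpr hψ)

namespace PontryaginDual

variable {G : Type*} [CommGroup G] [TopologicalSpace G]

def annihilator (H : Subgroup G) : Set (PontryaginDual G) := {χ | ∀ h ∈ H, χ h = 1}

variable [IsTopologicalGroup G]

theorem range_map_quotientMk_eq_annihilator (H : Subgroup G) (hH : IsOpen (H : Set G)) :
    Set.range (map (⟨QuotientGroup.mk' H, QuotientGroup.continuous_mk⟩ : G →ₜ* G ⧸ H)) =
      annihilator H := by
  have := QuotientGroup.discreteTopology hH
  ext χ
  constructor
  · rintro ⟨ψ, rfl⟩ h hh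
    rw [map_apply]
    exact (congrArg ψ ((QuotientGroup.eq_one_iff h).mpr hh)).trans (_root_.map_one ψ)
  · intro hχ
    refine ⟨⟨QuotientGroup.lift H χ.toMonoidHom fun h hh => hχ h hh,
      continuous_of_discreteTopology⟩, ?_⟩
    ext g
    rfl

theorem isCompact_annihilator (H : Subgroup G) (hH : IsOpen (H : Set G)) :
    IsCompact (annihilator H) := by
  have := QuotientGroup.discreteTopology hH
  rw [← range_map_quotientMk_eq_annihilator H hH]
  exact isCompact_range (map _).continuous

theorem integral_conj_mul_indicator_eq_indicator_annihilator [MeasurableSpace G] [BorelSpace G]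
    (μ : Measure G) [μ.IsMulLeftInvariant] (H : Subgroup G) (hH : MeasurableSet (H : Set G))
    (χ : PontryaginDual G) :
    ∫ g, (starRingEnd ℂ) (χ g : ℂ) * (H : Set G).indicator 1 g ∂μ =
      (annihilator H).indicator (fun _ => (μ.real H : ℂ)) χ := by
  have hrestrict : (fun g => (starRingEnd ℂ) (χ g : ℂ) * (H : Set G).indicator 1 g) =
      (H : Set G).indicator fun g => (starRingEnd ℂ) (χ g : ℂ) :=
    funext fun g => by by_cases hg : g ∈ H <;> simp [hg]
  rw [hrestrict, integral_indicator hH]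
  by_cases hχ : χ ∈ annihilator H
  · have hconj : Set.EqOn (fun g => (starRingEnd ℂ) (χ g : ℂ)) 1 H := fun g hg => by
      simp only [hχ g hg, Circle.coe_one, _root_.map_one, Pi.one_apply]
    rw [Set.indicator_of_mem hχ, setIntegral_congr_fun hH hconj, Pi.one_def, setIntegral_const,
      Complex.real_smul, mul_one]
  · obtain ⟨h, hh, hχh⟩ : ∃ h ∈ H, χ h ≠ 1 := by simpa [annihilator] using hχ
    rw [Set.indicator_of_notMem hχ]
    refine H.setIntegral_monoidHom_eq_zero hH
      ((starRingEnd ℂ).toMonoidHom.comp (Circle.coeHom.comp χ.toMonoidHom)) hh ?_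
    change (starRingEnd ℂ) (χ h : ℂ) ≠ 1
    rwa [Ne, map_eq_one_iff _ (RingHom.injective _), ← Circle.coe_one, Circle.coe_inj]

end PontryaginDual

theorem haar_compact_open_mul_annihilator_eq_one_general
    {G : Type*} [CommGroup G] [TopologicalSpace G] [IsTopologicalGroup G]
    [MeasurableSpace G] [BorelSpace G]
    [MeasurableSpace (PontryaginDual G)] [BorelSpace (PontryaginDual G)]
    (μ : Measure G) [μ.IsHaarMeasure]
    (μhat : Measure (PontryaginDual G)) [μhat.IsHaarMeasure]
    (H : Subgroup G) (hcomp : IsCompact (H : Set G)) (hopen : IsOpen (H : Set G))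
    (hinv : ∀ f : G → ℂ, Continuous f → HasCompactSupport f →
      Integrable (fun χ : PontryaginDual G => ∫ g, (starRingEnd ℂ) (χ g : ℂ) * f g ∂μ) μhat →
      ∀ x : G, f x =
        ∫ χ : PontryaginDual G, (∫ g, (starRingEnd ℂ) (χ g : ℂ) * f g ∂μ) * (χ x : ℂ) ∂μhat) :
    μ (H : Set G) * μhat {χ : PontryaginDual G | ∀ h ∈ H, χ h = 1} = 1 := by
  change μ H * μhat (PontryaginDual.annihilator H) = 1
  have hΛ := PontryaginDual.isCompact_annihilator H hopen
  have hFT := PontryaginDual.integral_conj_mul_indicator_eq_indicator_annihilator μ H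
    hopen.measurableSet
  have hcont : Continuous ((H : Set G).indicator (1 : G → ℂ)) :=
    IsClopen.continuous_indicator ⟨H.isClosed_of_isOpen hopen, hopen⟩ continuous_one
  have hsupp : HasCompactSupport ((H : Set G).indicator (1 : G → ℂ)) :=
    HasCompactSupport.intro hcomp fun _ hx => Set.indicator_of_notMem hx _
  have hint : Integrable
      ((PontryaginDual.annihilator H).indicator fun _ => (μ.real H : ℂ)) μhat :=
    (integrable_indicator_iff hΛ.isClosed.measurableSet).mpr
      (integrableOn_const hΛ.measure_lt_top.ne)
  have h := hinv _ hcont hsupp (by simpa only [hFT] using hint) 1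
  simp only [hFT, map_one, Circle.coe_one, mul_one,
    integral_indicator hΛ.isClosed.measurableSet, setIntegral_const] at h
  rw [Set.indicator_of_mem H.one_mem, Pi.one_apply, Complex.real_smul] at h
  have hreal : μ.real H * μhat.real (PontryaginDual.annihilator H) = 1 := by
    rw [mul_comm]; exact_mod_cast h.symm
  rwa [← ENNReal.toReal_eq_one_iff, ENNReal.toReal_mul]

/-- Let `G` be a second countable locally compact abelian group and `H` a
compact open subgroup, with Haar measure `μ` on `G` normalized so that the Fourier inversion
formula holds with the Haar measure `μhat` on the Pontryagin dual `Ĝ`. Then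
`μ H * μhat H^⊥ = 1`, where `H^⊥` is the annihilator of `H` in `Ĝ`. -/
theorem haar_compact_open_mul_annihilator_eq_one
    {G : Type*} [CommGroup G] [TopologicalSpace G] [IsTopologicalGroup G]
    [LocallyCompactSpace G] [T2Space G] [SecondCountableTopology G]
    [MeasurableSpace G] [BorelSpace G]
    [MeasurableSpace (PontryaginDual G)] [BorelSpace (PontryaginDual G)]
    (μ : Measure G) [μ.IsHaarMeasure]
    (μhat : Measure (PontryaginDual G)) [μhat.IsHaarMeasure]
    (H : Subgroup G) (hcomp : IsCompact (H : Set G)) (hopen : IsOpen (H : Set G))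
    (hinv : ∀ f : G → ℂ, Continuous f → HasCompactSupport f →
      Integrable (fun χ : PontryaginDual G => ∫ g, (starRingEnd ℂ) (χ g : ℂ) * f g ∂μ) μhat →
      ∀ x : G, f x =
        ∫ χ : PontryaginDual G, (∫ g, (starRingEnd ℂ) (χ g : ℂ) * f g ∂μ) * (χ x : ℂ) ∂μhat) :
    μ (H : Set G) * μhat {χ : PontryaginDual G | ∀ h ∈ H, χ h = 1} = 1 :=
  haar_compact_open_mul_annihilator_eq_one_general μ μhat H hcomp hopen hinv
end

section
/- Let G be a finite abelian group and define, for an operator A on ℂ^G with kernel k_A(g,g'), the Kirkwood–Dirac distribution KD_A(g,χ) = conj(χ(g)) · (1/|G|) · Σ_{g'∈G} k_A(g,g') χ(g') (with suitable normalization). Then the map A ↦ KD_A is a unitary isomorphism from the Hilbert–Schmidt operators on ℂ^G (with inner product ⟨A,B⟩ = tr(A*B)) onto ℓ²(G × Ĝ) with the appropriate normalized counting measures. -/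
/-! For each fixed `g`, `χ ↦ conj (χ g) * KD_A (g, χ)` is, up to `1/|G|`, the Fourier transform of
the row `k_A g`. Since `|χ g| = 1`, Plancherel for that transform turns the Hilbert–Schmidt
product of two kernels into `|G|` times the `ℓ²` product of their distributions. An isometric
linear map is injective, and `ℂ^(G × G)` and `ℂ^(G × Ĝ)` have the same dimension because
`|Ĝ| = |G|`, so it is bijective. -/

open Finset

/-- The Kirkwood–Dirac distribution of an operator on `ℂ^G` given by its kernel `k`, as a
function on phase space `G × Ĝ` (with the normalization `1/|G|`). -/
noncomputable def kdKernel {G : Type*} [AddCommGroup G] [Fintype G]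
    (k : G → G → ℂ) : G × AddChar G Circle → ℂ :=
  fun p => (starRingEnd ℂ) (p.2 p.1 : ℂ) *
    ((Fintype.card G : ℂ)⁻¹ * ∑ g' : G, k p.1 g' * (p.2 g' : ℂ))

open Function ComplexConjugate

section

variable {G : Type*} [AddCommGroup G] [Fintype G]

namespace AddChar

variable [Fintype (AddChar G Circle)]

lemma card_circle_eq : Fintype.card (AddChar G Circle) = Fintype.card G :=
  (Fintype.card_congr circleEquivComplex.toEquiv).trans card_eq

lemma sum_circle_apply_eq_ite [DecidableEq G] (a : G) :
    ∑ χ : AddChar G Circle, (χ a : ℂ) = if a = 0 then (Fintype.card G : ℂ) else 0 := by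
  rw [← sum_apply_eq_ite a]
  exact Fintype.sum_equiv circleEquivComplex.toEquiv _ _ fun _ => rfl

lemma sum_conj_circle_apply_mul [DecidableEq G] (a b : G) :
    ∑ χ : AddChar G Circle, conj (χ a : ℂ) * χ b =
      if a = b then (Fintype.card G : ℂ) else 0 := by
  simp_rw [← Circle.coe_inv_eq_conj, ← map_neg_eq_inv, ← Circle.coe_mul, ← map_add_eq_mul,
    neg_add_eq_sub, sum_circle_apply_eq_ite, sub_eq_zero, eq_comm]

lemma plancherel_circle (c d : G → ℂ) :
    ∑ χ : AddChar G Circle, conj (∑ g, c g * χ g) * ∑ g, d g * χ g =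
      Fintype.card G * ∑ g, conj (c g) * d g := by
  classical
  simp_rw [map_sum, map_mul, sum_mul_sum, mul_mul_mul_comm]
  rw [sum_comm]
  simp_rw [sum_comm (s := (univ : Finset (AddChar G Circle))), ← mul_sum,
    sum_conj_circle_apply_mul, mul_ite, mul_zero, sum_ite_eq, if_pos (mem_univ _), mul_sum,
    mul_comm]

end AddChar

variable (G) in
noncomputable def kdLinearMap : (G → G → ℂ) →ₗ[ℂ] (G × AddChar G Circle → ℂ) where
  toFun := kdKernel
  map_add' kA kB := by
    funext p
    simp only [kdKernel, Pi.add_apply, add_mul, sum_add_distrib, mul_add]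
  map_smul' c k := by
    funext p
    simp only [kdKernel, Pi.smul_apply, smul_eq_mul, RingHom.id_apply, mul_assoc, ← mul_sum]
    ring

@[simp]
lemma coe_kdLinearMap : ⇑(kdLinearMap G) = kdKernel := rfl

lemma conj_kdKernel_mul_kdKernel (kA kB : G → G → ℂ) (g : G) (χ : AddChar G Circle) :
    conj (kdKernel kA (g, χ)) * kdKernel kB (g, χ) =
      (Fintype.card G : ℂ)⁻¹ ^ 2 * (conj (∑ g', kA g g' * χ g') * ∑ g', kB g g' * χ g') := by
  have hχ : (χ g : ℂ) * conj (χ g : ℂ) = 1 := by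
    rw [Complex.mul_conj, Circle.normSq_coe, Complex.ofReal_one]
  simp only [kdKernel, map_mul, map_inv₀, map_natCast, Complex.conj_conj]
  linear_combination (Fintype.card G : ℂ)⁻¹ ^ 2 *
    (conj (∑ g', kA g g' * χ g') * ∑ g', kB g g' * χ g') * hχ

variable [Fintype (AddChar G Circle)]

theorem kdKernel_plancherel (kA kB : G → G → ℂ) :
    Fintype.card G * ∑ p : G × AddChar G Circle, conj (kdKernel kA p) * kdKernel kB p =
      ∑ g, ∑ g', conj (kA g g') * kB g g' := by
  simp_rw [Fintype.sum_prod_type, conj_kdKernel_mul_kdKernel, ← mul_sum,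
    AddChar.plancherel_circle, mul_sum]
  refine sum_congr rfl fun g _ => ?_
  field_simp

open scoped ComplexOrder Matrix in
lemma kdKernel_injective : Injective (kdKernel (G := G)) := by
  rw [← coe_kdLinearMap, injective_iff_map_eq_zero]
  intro k hk
  have hnorm := kdKernel_plancherel k k
  simp only [← coe_kdLinearMap, hk, Pi.zero_apply, mul_zero, sum_const_zero] at hnorm
  refine Matrix.trace_mul_conjTranspose_self_eq_zero_iff.1 ?_
  calc (Matrix.of k * (Matrix.of k)ᴴ).trace = ∑ g, ∑ g', conj (k g g') * k g g' := by
        simp only [Matrix.trace, Matrix.diag, Matrix.mul_apply, Matrix.conjTranspose_apply,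
          Matrix.of_apply, Complex.star_def, mul_comm (k _ _)]
    _ = 0 := hnorm.symm

lemma kdKernel_bijective : Bijective (kdKernel (G := G)) := by
  have hdim : Module.finrank ℂ (G → G → ℂ) = Module.finrank ℂ (G × AddChar G Circle → ℂ) := by
    rw [Module.finrank_pi_fintype, Module.finrank_fintype_fun_eq_card,
      Module.finrank_fintype_fun_eq_card, Fintype.card_prod, AddChar.card_circle_eq, sum_const,
      card_univ, smul_eq_mul]
  rw [← coe_kdLinearMap]
  exact ⟨kdKernel_injective,
    (LinearMap.injective_iff_surjective_of_finrank_eq_finrank hdim).1 kdKernel_injective⟩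

end

/-- Let `G` be a finite abelian group. The map `A ↦ KD_A` sending an operator
on `ℂ^G` (identified with its kernel) to its Kirkwood–Dirac distribution is a unitary isomorphism
from the Hilbert–Schmidt operators on `ℂ^G` (with inner product `tr(A*B)`) onto `ℓ²(G × Ĝ)` with
the appropriately normalized counting measures: it is bijective and preserves inner products. -/
theorem kd_unitary_finite
    (G : Type*) [AddCommGroup G] [Fintype G] [Fintype (AddChar G Circle)] :
    Function.Bijective (kdKernel (G := G)) ∧
      ∀ kA kB : G → G → ℂ,
        (Fintype.card G : ℂ) *
            ∑ p : G × AddChar G Circle, (starRingEnd ℂ) (kdKernel kA p) * kdKernel kB p =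
          ∑ g : G, ∑ g' : G, (starRingEnd ℂ) (kA g g') * kB g g' :=
  ⟨kdKernel_bijective, kdKernel_plancherel⟩
end
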